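/- Let Ω ⊆ ℝ² be open, ε ≥ 0, and u : Ω → ℝ^l a smooth sphere-valued ε-harmonic map. Then the combined stress-energy tensor is divergence free: for each β ∈ {1,2} and every x ∈ Ω, ∑_{α=1}^{2} ∂_α(S¹_{αβ}(u) − ε S²_{αβ}(u))(x) = 0. -/

import Mathlib

open scoped RealInnerProductSpace
open Filter MeasureTheory Metric

noncomputable section

/-- The plane `ℝ²` as a Euclidean space. -/
abbrev E2 : Type := EuclideanSpace ℝ (Fin 2)

/-- Euclidean space `ℝ^l`. -/
abbrev Eu (l : ℕ) : Type := EuclideanSpace ℝ (Fin l)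

/-- Partial derivative `∂_α u` of a map `u : ℝ² → ℝ^l`. -/
def pd {l : ℕ} (α : Fin 2) (u : E2 → Eu l) (x : E2) : Eu l :=
  fderiv ℝ u x (EuclideanSpace.single α 1)

/-- Partial derivative `∂_α f` of a scalar function `f : ℝ² → ℝ`. -/
def pds (α : Fin 2) (f : E2 → ℝ) (x : E2) : ℝ :=
  fderiv ℝ f x (EuclideanSpace.single α 1)

/-- The componentwise Laplacian `Δu = ∂₁∂₁u + ∂₂∂₂u`. -/
def lap {l : ℕ} (u : E2 → Eu l) (x : E2) : Eu l :=
  pd 0 (pd 0 u) x + pd 1 (pd 1 u) x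

/-- `|∇u|² = |∂₁u|² + |∂₂u|²`. -/
def gradSq {l : ℕ} (u : E2 → Eu l) (x : E2) : ℝ :=
  ‖pd 0 u x‖ ^ 2 + ‖pd 1 u x‖ ^ 2

/-- The harmonic stress-energy tensor `S¹_{αβ}(u) = ½|∇u|²δ_{αβ} − ⟨∂_α u, ∂_β u⟩`. -/
def S1 {l : ℕ} (u : E2 → Eu l) (α β : Fin 2) (x : E2) : ℝ :=
  (1 / 2) * gradSq u x * (if α = β then 1 else 0) - ⟪pd α u x, pd β u x⟫

/-- Jiang's biharmonic stress-energy tensor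
`S²_{αβ}(u) = ½|Δu|²δ_{αβ} + ∑_γ ⟨∂_γ u, ∂_γ Δu⟩ δ_{αβ} − ⟨∂_α u, ∂_β Δu⟩ − ⟨∂_β u, ∂_α Δu⟩`. -/
def S2 {l : ℕ} (u : E2 → Eu l) (α β : Fin 2) (x : E2) : ℝ :=
  (1 / 2) * ‖lap u x‖ ^ 2 * (if α = β then 1 else 0)
    + (∑ γ : Fin 2, ⟪pd γ u x, pd γ (lap u) x⟫) * (if α = β then 1 else 0)
    - ⟪pd α u x, pd β (lap u) x⟫ - ⟪pd β u x, pd α (lap u) x⟫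

/-- A sphere-valued map `u : Ω → S^{l-1} ⊂ ℝ^l` is `ε`-harmonic if `Δu − εΔ²u` is a real
scalar multiple of `u` at every point of `Ω` (the Euler–Lagrange equation of the ε-energy). -/
def IsEpsHarmonic {l : ℕ} (ε : ℝ) (Ω : Set E2) (u : E2 → Eu l) : Prop :=
  ∀ x ∈ Ω, ∃ c : ℝ, lap u x - ε • lap (lap u) x = c • u x

variable {l : ℕ} {Ω : Set E2} {x : E2}

lemma smooth_pd {f : E2 → Eu l} (hΩ : IsOpen Ω) (hf : ContDiffOn ℝ (⊤ : ℕ∞) f Ω) (α : Fin 2) :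
    ContDiffOn ℝ (⊤ : ℕ∞) (pd α f) Ω :=
  (hf.fderiv_of_isOpen hΩ (by simp)).clm_apply contDiffOn_const

lemma smooth_lap {f : E2 → Eu l} (hΩ : IsOpen Ω) (hf : ContDiffOn ℝ (⊤ : ℕ∞) f Ω) :
    ContDiffOn ℝ (⊤ : ℕ∞) (lap f) Ω :=
  (smooth_pd hΩ (smooth_pd hΩ hf 0) 0).add (smooth_pd hΩ (smooth_pd hΩ hf 1) 1)

lemma diffAt {F : Type*} [NormedAddCommGroup F] [NormedSpace ℝ F] {f : E2 → F}
    (hΩ : IsOpen Ω) (hf : ContDiffOn ℝ (⊤ : ℕ∞) f Ω) (hx : x ∈ Ω) : DifferentiableAt ℝ f x :=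
  (hf.contDiffAt (hΩ.mem_nhds hx)).differentiableAt (by simp)

lemma pds_inner {f g : E2 → Eu l} (hf : DifferentiableAt ℝ f x) (hg : DifferentiableAt ℝ g x)
    (α : Fin 2) : pds α (fun y => ⟪f y, g y⟫) x = ⟪pd α f x, g x⟫ + ⟪f x, pd α g x⟫ := by
  unfold pds pd
  rw [fderiv_inner_apply ℝ hf hg, add_comm]

lemma pd_swap {f : E2 → Eu l} (hΩ : IsOpen Ω) (hf : ContDiffOn ℝ (⊤ : ℕ∞) f Ω) (hx : x ∈ Ω)
    (α γ : Fin 2) : pd α (pd γ f) x = pd γ (pd α f) x := by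
  have hF : ContDiffOn ℝ (⊤ : ℕ∞) (fderiv ℝ f) Ω := hf.fderiv_of_isOpen hΩ (by simp)
  have hFd : DifferentiableAt ℝ (fderiv ℝ f) x := diffAt hΩ hF hx
  have key : ∀ v w : E2, fderiv ℝ (fun y => fderiv ℝ f y v) x w
      = fderiv ℝ (fderiv ℝ f) x w v := by
    intro v w
    have h2 := ((ContinuousLinearMap.apply ℝ (Eu l) v).hasFDerivAt.comp x
      hFd.hasFDerivAt).fderiv
    have : (fun y => fderiv ℝ f y v)
        = (ContinuousLinearMap.apply ℝ (Eu l) v) ∘ (fderiv ℝ f) := rfl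
    rw [this, h2]; rfl
  have hsymm : ∀ v w : E2, fderiv ℝ (fderiv ℝ f) x v w = fderiv ℝ (fderiv ℝ f) x w v :=
    (hf.contDiffAt (hΩ.mem_nhds hx)).isSymmSndFDerivAt (by rw [minSmoothness_of_isRCLikeNormedField]; exact WithTop.coe_le_coe.mpr le_top)
  show fderiv ℝ (fun y => fderiv ℝ f y (EuclideanSpace.single γ 1)) x (EuclideanSpace.single α 1)
    = fderiv ℝ (fun y => fderiv ℝ f y (EuclideanSpace.single α 1)) x (EuclideanSpace.single γ 1)
  rw [key, key, hsymm]

lemma pds_sub {f g : E2 → ℝ} (hf : DifferentiableAt ℝ f x) (hg : DifferentiableAt ℝ g x)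
    (α : Fin 2) : pds α (fun y => f y - g y) x = pds α f x - pds α g x := by
  unfold pds; rw [fderiv_fun_sub hf hg]; rfl

lemma pds_add {f g : E2 → ℝ} (hf : DifferentiableAt ℝ f x) (hg : DifferentiableAt ℝ g x)
    (α : Fin 2) : pds α (fun y => f y + g y) x = pds α f x + pds α g x := by
  unfold pds; rw [fderiv_fun_add hf hg]; rfl

lemma pds_const_mul {f : E2 → ℝ} (hf : DifferentiableAt ℝ f x) (c : ℝ)
    (α : Fin 2) : pds α (fun y => c * f y) x = c * pds α f x := by
  unfold pds; rw [fderiv_const_mul hf]; rfl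

-- differentiability of inner building blocks
lemma diff_inner {f g : E2 → Eu l} (hf : DifferentiableAt ℝ f x) (hg : DifferentiableAt ℝ g x) :
    DifferentiableAt ℝ (fun y => ⟪f y, g y⟫) x := hf.inner ℝ hg

-- the rewriting of S1 into inner form
lemma S1_eq (u : E2 → Eu l) (α β : Fin 2) : S1 u α β =
    fun y => (if α = β then (1/2) * (⟪pd 0 u y, pd 0 u y⟫ + ⟪pd 1 u y, pd 1 u y⟫) else 0)
      - ⟪pd α u y, pd β u y⟫ := by
  funext y
  simp only [S1, gradSq, ← real_inner_self_eq_norm_sq]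
  split_ifs <;> ring

lemma S2_eq (u : E2 → Eu l) (α β : Fin 2) : S2 u α β =
    fun y => ((if α = β then (1/2) * ⟪lap u y, lap u y⟫
        + (⟪pd 0 u y, pd 0 (lap u) y⟫ + ⟪pd 1 u y, pd 1 (lap u) y⟫) else 0)
      - ⟪pd α u y, pd β (lap u) y⟫) - ⟪pd β u y, pd α (lap u) y⟫ := by
  funext y
  simp only [S2, ← real_inner_self_eq_norm_sq, Fin.sum_univ_two]
  split_ifs <;> ring

lemma pds_const (c : ℝ) (α : Fin 2) (x : E2) : pds α (fun _ => c) x = 0 := by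
  unfold pds; rw [fderiv_fun_const]; rfl

lemma divS1 (hΩ : IsOpen Ω) {u : E2 → Eu l} (hu : ContDiffOn ℝ (⊤ : ℕ∞) u Ω) (hx : x ∈ Ω) (β : Fin 2) :
    ∑ α : Fin 2, pds α (S1 u α β) x = -⟪lap u x, pd β u x⟫ := by
  have d1 : ∀ γ, DifferentiableAt ℝ (pd γ u) x := fun γ => diffAt hΩ (smooth_pd hΩ hu γ) hx
  have h1 : ∀ α, pds α (S1 u α β) x =
      (if α = β then (⟪pd α (pd 0 u) x, pd 0 u x⟫ + ⟪pd 0 u x, pd α (pd 0 u) x⟫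
        + (⟪pd α (pd 1 u) x, pd 1 u x⟫ + ⟪pd 1 u x, pd α (pd 1 u) x⟫)) / 2 else 0)
      - ⟪pd α (pd α u) x, pd β u x⟫ - ⟪pd α u x, pd α (pd β u) x⟫ := by
    intro α
    rw [S1_eq]
    by_cases h : α = β
    · simp only [if_pos h]
      rw [pds_sub (((diff_inner (d1 0) (d1 0)).fun_add (diff_inner (d1 1) (d1 1))).const_mul _)
        (diff_inner (d1 α) (d1 β)),
        pds_const_mul ((diff_inner (d1 0) (d1 0)).fun_add (diff_inner (d1 1) (d1 1))),
        pds_add (diff_inner (d1 0) (d1 0)) (diff_inner (d1 1) (d1 1)),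
        pds_inner (d1 0) (d1 0), pds_inner (d1 1) (d1 1), pds_inner (d1 α) (d1 β)]
      ring
    · simp only [if_neg h]
      rw [pds_sub (differentiableAt_const _) (diff_inner (d1 α) (d1 β)),
        pds_const, pds_inner (d1 α) (d1 β)]
      ring
  have hsw := pd_swap hΩ hu hx
  have hl : lap u x = pd 0 (pd 0 u) x + pd 1 (pd 1 u) x := rfl
  simp only [h1, Finset.sum_sub_distrib, Finset.sum_ite_eq', Finset.mem_univ, if_true,
    Fin.sum_univ_two, hl, inner_add_left]
  rw [hsw 0 β, hsw 1 β]
  linarith [real_inner_comm (pd 0 u x) (pd β (pd 0 u) x),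
    real_inner_comm (pd 1 u x) (pd β (pd 1 u) x)]

lemma divS2 (hΩ : IsOpen Ω) {u : E2 → Eu l} (hu : ContDiffOn ℝ (⊤ : ℕ∞) u Ω) (hx : x ∈ Ω) (β : Fin 2) :
    ∑ α : Fin 2, pds α (S2 u α β) x = -⟪pd β u x, lap (lap u) x⟫ := by
  have hv : ContDiffOn ℝ (⊤ : ℕ∞) (lap u) Ω := smooth_lap hΩ hu
  have d1 : ∀ γ, DifferentiableAt ℝ (pd γ u) x := fun γ => diffAt hΩ (smooth_pd hΩ hu γ) hx
  have dv : DifferentiableAt ℝ (lap u) x := diffAt hΩ hv hx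
  have d2 : ∀ γ, DifferentiableAt ℝ (pd γ (lap u)) x := fun γ => diffAt hΩ (smooth_pd hΩ hv γ) hx
  have h2 : ∀ α, pds α (S2 u α β) x =
      (if α = β then (⟪pd α (lap u) x, lap u x⟫ + ⟪lap u x, pd α (lap u) x⟫) / 2
        + (⟪pd α (pd 0 u) x, pd 0 (lap u) x⟫ + ⟪pd 0 u x, pd α (pd 0 (lap u)) x⟫
          + (⟪pd α (pd 1 u) x, pd 1 (lap u) x⟫ + ⟪pd 1 u x, pd α (pd 1 (lap u)) x⟫)) else 0)
      - (⟪pd α (pd α u) x, pd β (lap u) x⟫ + ⟪pd α u x, pd α (pd β (lap u)) x⟫)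
      - (⟪pd α (pd β u) x, pd α (lap u) x⟫ + ⟪pd β u x, pd α (pd α (lap u)) x⟫) := by
    intro α
    rw [S2_eq]
    have dI1 : DifferentiableAt ℝ (fun y => ⟪pd α u y, pd β (lap u) y⟫) x :=
      diff_inner (d1 α) (d2 β)
    have dI2 : DifferentiableAt ℝ (fun y => ⟪pd β u y, pd α (lap u) y⟫) x :=
      diff_inner (d1 β) (d2 α)
    by_cases h : α = β
    · simp only [if_pos h]
      have dA : DifferentiableAt ℝ (fun y => (1/2) * ⟪lap u y, lap u y⟫
          + (⟪pd 0 u y, pd 0 (lap u) y⟫ + ⟪pd 1 u y, pd 1 (lap u) y⟫)) x :=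
        ((diff_inner dv dv).const_mul _).add
          ((diff_inner (d1 0) (d2 0)).add (diff_inner (d1 1) (d2 1)))
      rw [pds_sub (dA.fun_sub dI1) dI2, pds_sub dA dI1,
        pds_add ((diff_inner dv dv).const_mul _)
          ((diff_inner (d1 0) (d2 0)).fun_add (diff_inner (d1 1) (d2 1))),
        pds_const_mul (diff_inner dv dv),
        pds_add (diff_inner (d1 0) (d2 0)) (diff_inner (d1 1) (d2 1)),
        pds_inner dv dv, pds_inner (d1 0) (d2 0), pds_inner (d1 1) (d2 1),
        pds_inner (d1 α) (d2 β), pds_inner (d1 β) (d2 α)]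
      ring
    · simp only [if_neg h]
      rw [pds_sub ((differentiableAt_const _).fun_sub dI1) dI2,
        pds_sub (differentiableAt_const _) dI1,
        pds_const, pds_inner (d1 α) (d2 β), pds_inner (d1 β) (d2 α)]

  have hsw := pd_swap hΩ hu hx
  have hswv := pd_swap hΩ hv hx
  have hl : lap u x = pd 0 (pd 0 u) x + pd 1 (pd 1 u) x := rfl
  have hll : lap (lap u) x = pd 0 (pd 0 (lap u)) x + pd 1 (pd 1 (lap u)) x := rfl
  simp only [h2, Finset.sum_sub_distrib, Finset.sum_ite_eq', Finset.mem_univ, if_true,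
    Fin.sum_univ_two]
  rw [hsw 0 β, hsw 1 β, hswv 0 β, hswv 1 β, hll, hl]
  simp only [inner_add_left, inner_add_right]
  linarith [real_inner_comm (pd β (lap u) x) (pd 0 (pd 0 u) x),
    real_inner_comm (pd β (lap u) x) (pd 1 (pd 1 u) x)]


/-- for a smooth sphere-valued `ε`-harmonic map `u : Ω → ℝ^l` (`ε ≥ 0`) on an open
set `Ω ⊆ ℝ²`, the combined stress-energy tensor is divergence free:
`∑_α ∂_α (S¹_{αβ}(u) − ε S²_{αβ}(u)) = 0` on `Ω`. -/
theorem combined_stress_energy_divergence_free {l : ℕ} (Ω : Set E2) (hΩ : IsOpen Ω)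
    (ε : ℝ) (hε : 0 ≤ ε) (u : E2 → Eu l) (hu : ContDiffOn ℝ (⊤ : ℕ∞) u Ω)
    (hsph : ∀ x ∈ Ω, ‖u x‖ = 1) (hharm : IsEpsHarmonic ε Ω u)
    (β : Fin 2) (x : E2) (hx : x ∈ Ω) :
    ∑ α : Fin 2, pds α (fun y => S1 u α β y - ε * S2 u α β y) x = 0 := by
  have hv : ContDiffOn ℝ (⊤ : ℕ∞) (lap u) Ω := smooth_lap hΩ hu
  have du : DifferentiableAt ℝ u x := diffAt hΩ hu hx
  have d1 : ∀ γ, DifferentiableAt ℝ (pd γ u) x := fun γ => diffAt hΩ (smooth_pd hΩ hu γ) hx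
  have dv : DifferentiableAt ℝ (lap u) x := diffAt hΩ hv hx
  have d2 : ∀ γ, DifferentiableAt ℝ (pd γ (lap u)) x := fun γ => diffAt hΩ (smooth_pd hΩ hv γ) hx
  have hdS1 : ∀ α, DifferentiableAt ℝ (S1 u α β) x := by
    intro α; rw [S1_eq]
    refine DifferentiableAt.sub ?_ (diff_inner (d1 α) (d1 β))
    by_cases h : α = β
    · simp only [if_pos h]
      exact ((diff_inner (d1 0) (d1 0)).add (diff_inner (d1 1) (d1 1))).const_mul _
    · simp only [if_neg h]; exact differentiableAt_const _
  have hdS2 : ∀ α, DifferentiableAt ℝ (S2 u α β) x := by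
    intro α; rw [S2_eq]
    refine DifferentiableAt.sub (DifferentiableAt.sub ?_ (diff_inner (d1 α) (d2 β)))
      (diff_inner (d1 β) (d2 α))
    by_cases h : α = β
    · simp only [if_pos h]
      exact ((diff_inner dv dv).const_mul _).add
        ((diff_inner (d1 0) (d2 0)).add (diff_inner (d1 1) (d2 1)))
    · simp only [if_neg h]; exact differentiableAt_const _
  -- orthogonality of u and its derivatives
  have horth : ⟪u x, pd β u x⟫ = 0 := by
    have hev : (fun y => ⟪u y, u y⟫) =ᶠ[nhds x] (fun _ => (1:ℝ)) := by
      filter_upwards [hΩ.mem_nhds hx] with y hy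
      rw [real_inner_self_eq_norm_sq, hsph y hy]; norm_num
    have h0 : pds β (fun y => ⟪u y, u y⟫) x = 0 := by
      unfold pds; rw [hev.fderiv_eq, fderiv_fun_const]; rfl
    rw [pds_inner du du β] at h0
    linarith [h0, real_inner_comm (u x) (pd β u x)]
  have hstep : ∀ α, pds α (fun y => S1 u α β y - ε * S2 u α β y) x
      = pds α (S1 u α β) x - ε * pds α (S2 u α β) x := by
    intro α
    rw [pds_sub (hdS1 α) ((hdS2 α).const_mul ε), pds_const_mul (hdS2 α)]
  obtain ⟨c, hc⟩ := hharm x hx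
  have hinner := congrArg (fun w : Eu l => ⟪w, pd β u x⟫) hc
  simp only [inner_sub_left, real_inner_smul_left] at hinner
  rw [horth, mul_zero] at hinner
  simp only [hstep, Finset.sum_sub_distrib, ← Finset.mul_sum,
    divS1 hΩ hu hx β, divS2 hΩ hu hx β]
  rw [real_inner_comm (lap (lap u) x) (pd β u x)]
  linarith

end
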